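/- For each κ > 0, the equation z^κ·((z − √κ)² + 1) = exp((z² − κ)/2)·κ^{κ/2} has exactly two solutions z in (0, ∞): one solution is z = √κ, and the other solution c_κ satisfies c_κ > √(1 + κ). -/

import Mathlib

/-!
Taking logarithms, the solutions are the zeros on `(0, ∞)` of `logGap κ`, which vanishes at `√κ`.
Since `κ = (√κ)²`, its derivative factors as `(z - √κ)² (1 + κ - z²) / (z ((z - √κ)² + 1))`,
so `logGap κ` increases strictly on `(0, √(1 + κ)]` and decreases strictly on `[√(1 + κ), ∞)`,
where it tends to `-∞`. Hence `√κ` is its only zero up to `√(1 + κ)`, where `logGap κ` is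
positive, and the intermediate value theorem gives exactly one zero beyond.
-/

open Real Set Filter

noncomputable def logGap (κ z : ℝ) : ℝ :=
  κ * log z + log ((z - √κ) ^ 2 + 1) - (z ^ 2 - κ) / 2 - κ / 2 * log κ

namespace logGap

variable {κ z : ℝ}

theorem eq_zero_iff (hκ : 0 < κ) (hz : 0 < z) :
    logGap κ z = 0 ↔ z ^ κ * ((z - √κ) ^ 2 + 1) = exp ((z ^ 2 - κ) / 2) * κ ^ (κ / 2) := by
  have hA : 0 < (z - √κ) ^ 2 + 1 := by positivity
  rw [rpow_def_of_pos hz, rpow_def_of_pos hκ, ← exp_log hA, ← exp_add, ← exp_add, exp_eq_exp,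
    logGap]
  constructor <;> intro h <;> linarith

theorem sqrt_self (hκ : 0 ≤ κ) : logGap κ √κ = 0 := by
  rw [logGap, log_sqrt hκ, sq_sqrt hκ, sub_self]
  norm_num
  ring

theorem hasDerivAt (hκ : 0 ≤ κ) (hz : 0 < z) :
    HasDerivAt (logGap κ) ((z - √κ) ^ 2 * (1 + κ - z ^ 2) / (z * ((z - √κ) ^ 2 + 1))) z := by
  have hA : (z - √κ) ^ 2 + 1 ≠ 0 := by positivity
  have hA' : HasDerivAt (fun z => (z - √κ) ^ 2 + 1) (2 * (z - √κ)) z := by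
    simpa using (((hasDerivAt_id z).sub_const √κ).pow 2).add_const 1
  have hB : HasDerivAt (fun z : ℝ => (z ^ 2 - κ) / 2) z z := by
    simpa using ((hasDerivAt_pow 2 z).sub_const κ).div_const 2
  refine ((((hasDerivAt_log hz.ne').const_mul κ).add (hA'.log hA)).sub hB).sub_const
    (κ / 2 * log κ) |>.congr_deriv ?_
  have hs := sq_sqrt hκ
  field_simp
  linear_combination -hs

theorem continuousOn (hκ : 0 ≤ κ) : ContinuousOn (logGap κ) (Ioi 0) :=
  fun _ hz => (hasDerivAt hκ hz).continuousAt.continuousWithinAt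

theorem strictMonoOn_of_convex {D : Set ℝ} (hκ : 0 ≤ κ) (hD : Convex ℝ D) (hD₀ : D ⊆ Ioi 0)
    (hDint : ∀ z ∈ interior D, z ≠ √κ ∧ z ^ 2 < 1 + κ) : StrictMonoOn (logGap κ) D := by
  refine strictMonoOn_of_deriv_pos hD ((continuousOn hκ).mono hD₀) fun z hz => ?_
  have hz₀ : 0 < z := hD₀ (interior_subset hz)
  obtain ⟨hne, hlt⟩ := hDint z hz
  rw [(hasDerivAt hκ hz₀).deriv]
  have : 0 < (z - √κ) ^ 2 := by positivity [sub_ne_zero.mpr hne]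
  exact div_pos (mul_pos this (by linarith)) (by positivity)

theorem strictMonoOn_Ioc (hκ : 0 < κ) : StrictMonoOn (logGap κ) (Ioc 0 √(1 + κ)) := by
  have hs₀ : 0 < √κ := sqrt_pos.2 hκ
  have hst : √κ < √(1 + κ) := sqrt_lt_sqrt hκ.le (by linarith)
  have hsq : ∀ z, z < √(1 + κ) → 0 ≤ z → z ^ 2 < 1 + κ := fun z hz hz₀ =>
    (lt_sqrt hz₀).1 hz
  rw [← Ioc_union_Icc_eq_Ioc hs₀ hst.le]
  refine StrictMonoOn.union ?_ ?_ (isGreatest_Ioc hs₀) (isLeast_Icc hst.le)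
  · refine strictMonoOn_of_convex hκ.le (convex_Ioc _ _) Ioc_subset_Ioi_self fun z hz => ?_
    rw [interior_Ioc] at hz
    exact ⟨hz.2.ne, hsq z (hz.2.trans hst) hz.1.le⟩
  · refine strictMonoOn_of_convex hκ.le (convex_Icc _ _)
      (fun z hz => hs₀.trans_le hz.1) fun z hz => ?_
    rw [interior_Icc] at hz
    exact ⟨hz.1.ne', hsq z hz.2 (hs₀.trans hz.1).le⟩

theorem strictAntiOn_Ici (hκ : 0 ≤ κ) : StrictAntiOn (logGap κ) (Ici √(1 + κ)) := by
  have ht₀ : 0 < √(1 + κ) := sqrt_pos.2 (by linarith)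
  have hst : √κ < √(1 + κ) := sqrt_lt_sqrt hκ (by linarith)
  refine strictAntiOn_of_deriv_neg (convex_Ici _)
    ((continuousOn hκ).mono fun z hz => ht₀.trans_le hz) fun z hz => ?_
  rw [interior_Ici] at hz
  have hz₀ : 0 < z := ht₀.trans hz
  rw [(hasDerivAt hκ hz₀).deriv]
  have h₁ : 0 < (z - √κ) ^ 2 := by positivity [(hst.trans hz).ne']
  have h₂ : 1 + κ < z ^ 2 := (sqrt_lt' hz₀).1 hz
  exact div_neg_of_neg_of_pos (mul_neg_of_pos_of_neg h₁ (by linarith)) (by positivity)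

theorem le_quadratic_of_sqrt_le (hκ : 0 ≤ κ) (hz : √κ ≤ z) :
    logGap κ z ≤ (κ + 2) * z - z ^ 2 / 2 + κ / 2 - κ / 2 * log κ := by
  have hz₀ : 0 ≤ z := (sqrt_nonneg κ).trans hz
  have h₁ : log z ≤ z := log_le_self hz₀
  have h₂ : log ((z - √κ) ^ 2 + 1) ≤ 2 * z := by
    calc log ((z - √κ) ^ 2 + 1) ≤ log ((z + 1) ^ 2) := by
          gcongr
          nlinarith [sqrt_nonneg κ]
      _ = 2 * log (z + 1) := by rw [log_pow]; norm_num
      _ ≤ 2 * z := by linarith [log_le_sub_one_of_pos (by linarith : 0 < z + 1)]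
  rw [logGap]
  nlinarith

theorem tendsto_atTop (hκ : 0 ≤ κ) : Tendsto (logGap κ) atTop atBot := by
  refine tendsto_atBot_mono' _ ?_
    (tendsto_atBot_add_const_right _ (κ / 2 - κ / 2 * log κ) tendsto_neg_atTop_atBot)
  filter_upwards [eventually_ge_atTop √κ, eventually_ge_atTop (2 * (κ + 3))] with z hzκ hz
  nlinarith [le_quadratic_of_sqrt_le hκ hzκ]

theorem exists_zero_gt_sqrt_one_add (hκ : 0 < κ) : ∃ c, √(1 + κ) < c ∧ logGap κ c = 0 := by
  have ht₀ : 0 < √(1 + κ) := sqrt_pos.2 (by linarith)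
  have hst : √κ < √(1 + κ) := sqrt_lt_sqrt hκ.le (by linarith)
  have ht : 0 < logGap κ √(1 + κ) := sqrt_self hκ.le ▸
    strictMonoOn_Ioc hκ ⟨sqrt_pos.2 hκ, hst.le⟩ ⟨ht₀, le_rfl⟩ hst
  obtain ⟨M, hM, htM⟩ := (((tendsto_atTop hκ.le).eventually (eventually_lt_atBot 0)).and
    (eventually_ge_atTop √(1 + κ))).exists
  obtain ⟨c, hc, hfc⟩ := intermediate_value_Icc' htM
    ((continuousOn hκ.le).mono fun z hz => ht₀.trans_le hz.1) ⟨hM.le, ht.le⟩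
  exact ⟨c, hc.1.lt_of_ne (by rintro rfl; exact ht.ne' hfc), hfc⟩

end logGap

theorem stmt0 (κ : ℝ) (hκ : 0 < κ) :
    ∃ c : ℝ, Real.sqrt (1 + κ) < c ∧ c ≠ Real.sqrt κ ∧
      {z : ℝ | 0 < z ∧ z ^ κ * ((z - Real.sqrt κ) ^ 2 + 1)
        = Real.exp ((z ^ 2 - κ) / 2) * κ ^ (κ / 2)} = {Real.sqrt κ, c} := by
  have hs₀ : 0 < √κ := sqrt_pos.2 hκ
  have hst : √κ < √(1 + κ) := sqrt_lt_sqrt hκ.le (by linarith)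
  obtain ⟨c, hc, hfc⟩ := logGap.exists_zero_gt_sqrt_one_add hκ
  have hc₀ : 0 < c := hs₀.trans (hst.trans hc)
  refine ⟨c, hc, (hst.trans hc).ne', Set.ext fun z => ⟨fun ⟨hz, heq⟩ => ?_, ?_⟩⟩
  · rw [← logGap.eq_zero_iff hκ hz] at heq
    rcases le_or_gt z √(1 + κ) with hzt | hzt
    · exact .inl <| (logGap.strictMonoOn_Ioc hκ).injOn ⟨hz, hzt⟩ ⟨hs₀, hst.le⟩
        (heq.trans (logGap.sqrt_self hκ.le).symm)
    · exact .inr <| (logGap.strictAntiOn_Ici hκ.le).injOn hzt.le hc.le (heq.trans hfc.symm)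
  · rintro (rfl | rfl)
    · exact ⟨hs₀, (logGap.eq_zero_iff hκ hs₀).1 (logGap.sqrt_self hκ.le)⟩
    · exact ⟨hc₀, (logGap.eq_zero_iff hκ hc₀).1 hfc⟩
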